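/- (Lemma A.1, second bound.) In the smoothing spline truncation setting, with A = T(TᵀT)⁻²Tᵀ, λ_max(A) its largest eigenvalue, and ζ₂ = 2 λ_max(A) (ζ₁ B B̃ ‖Σ̃‖_F² + ‖c‖²), the coefficient vectors satisfy ‖d̃ − d‖² ≤ ζ₂ ‖Σ̃ − Σ‖_F². -/

import Mathlib

open Matrix BigOperators

/-- Squared Frobenius norm of a real matrix. -/
noncomputable def frobSq {m n : ℕ} (M : Matrix (Fin m) (Fin n) ℝ) : ℝ :=
  ∑ i, ∑ j, (M i j) ^ 2

/-- Squared Euclidean norm of a real vector. -/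
noncomputable def vnormSq {m : ℕ} (v : Fin m → ℝ) : ℝ := ∑ i, (v i) ^ 2

/-!
Multiplying the spline system by `Q₂ᵀ` kills `T d` and leaves, for `z = Q₂ᵀ c`, the shifted system
`(Q₂ᵀ Σ Q₂ + nλ) z = Q₂ᵀ y` with positive definite matrix. In an eigenbasis of `N = Q₂ᵀ Σ Q₂`,
`‖z‖² ≤ B ‖(N + nλ) z‖²`; subtracting the two reduced systems then gives
`‖c − c̃‖² ≤ ζ₁ B B̃ ‖Σ̃ − Σ‖_F²`. Applying the left inverse `P = (TᵀT)⁻¹Tᵀ` of `T`, which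
annihilates `c` and `c̃`, gives `d̃ − d = P (Σ c − Σ̃ c̃)` with
`Σ c − Σ̃ c̃ = (Σ − Σ̃) c + Σ̃ (c − c̃)`, and `‖P w‖² = wᵀ A w ≤ λ_max(A) ‖w‖²` because `PᵀP = A`.
-/

section Norms

variable {m n k : ℕ}

lemma vnormSq_nonneg (v : Fin m → ℝ) : 0 ≤ vnormSq v :=
  Finset.sum_nonneg fun _ _ => sq_nonneg _

lemma frobSq_nonneg (M : Matrix (Fin m) (Fin n) ℝ) : 0 ≤ frobSq M :=
  Finset.sum_nonneg fun _ _ => Finset.sum_nonneg fun _ _ => sq_nonneg _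

lemma vnormSq_eq_dotProduct (v : Fin m → ℝ) : vnormSq v = v ⬝ᵥ v := by
  simp only [vnormSq, dotProduct, sq]

lemma frobSq_transpose (M : Matrix (Fin m) (Fin n) ℝ) : frobSq Mᵀ = frobSq M :=
  Finset.sum_comm

lemma frobSq_sub_comm (A B : Matrix (Fin m) (Fin n) ℝ) : frobSq (A - B) = frobSq (B - A) := by
  rw [← neg_sub B A]
  simp only [frobSq, Matrix.neg_apply, neg_sq]

lemma vnormSq_add_le (x y : Fin m → ℝ) : vnormSq (x + y) ≤ 2 * vnormSq x + 2 * vnormSq y := by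
  simp only [vnormSq, Finset.mul_sum, ← Finset.sum_add_distrib, Pi.add_apply]
  exact Finset.sum_le_sum fun i _ => by nlinarith [sq_nonneg (x i - y i)]

lemma vnormSq_mulVec_le (M : Matrix (Fin m) (Fin n) ℝ) (x : Fin n → ℝ) :
    vnormSq (M *ᵥ x) ≤ frobSq M * vnormSq x := by
  rw [vnormSq, frobSq, Finset.sum_mul]
  exact Finset.sum_le_sum fun i _ => by
    simpa [mulVec, dotProduct, vnormSq] using Finset.sum_mul_sq_le_sq_mul_sq Finset.univ (M i) x

lemma frobSq_mul_le (A : Matrix (Fin m) (Fin n) ℝ) (B : Matrix (Fin n) (Fin k) ℝ) :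
    frobSq (A * B) ≤ frobSq A * frobSq B := by
  rw [frobSq, frobSq, Finset.sum_mul]
  refine Finset.sum_le_sum fun i _ => ?_
  calc ∑ j, (A * B) i j ^ 2 ≤ ∑ j, (∑ l, A i l ^ 2) * ∑ l, B l j ^ 2 :=
        Finset.sum_le_sum fun j _ => by
          simpa [mul_apply] using Finset.sum_mul_sq_le_sq_mul_sq Finset.univ (A i) (fun l => B l j)
    _ = (∑ l, A i l ^ 2) * ∑ l, ∑ j, B l j ^ 2 := by rw [← Finset.mul_sum, Finset.sum_comm]

lemma frobSq_transpose_mul_mul_le (Q : Matrix (Fin m) (Fin n) ℝ) (M : Matrix (Fin m) (Fin m) ℝ) :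
    frobSq (Qᵀ * M * Q) ≤ frobSq Q ^ 2 * frobSq M :=
  calc frobSq (Qᵀ * M * Q) ≤ frobSq Qᵀ * frobSq M * frobSq Q :=
        (frobSq_mul_le _ _).trans (by gcongr; exacts [frobSq_nonneg _, frobSq_mul_le _ _])
    _ = frobSq Q ^ 2 * frobSq M := by rw [frobSq_transpose]; ring

lemma vnormSq_mulVec_of_transpose_mul_self {U : Matrix (Fin m) (Fin n) ℝ} (hU : Uᵀ * U = 1)
    (w : Fin n → ℝ) : vnormSq (U *ᵥ w) = vnormSq w := by
  rw [vnormSq_eq_dotProduct, vnormSq_eq_dotProduct, dotProduct_mulVec, ← mulVec_transpose,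
    mulVec_mulVec, hU, one_mulVec]

lemma vnormSq_mulVec_eq_dotProduct (P : Matrix (Fin m) (Fin n) ℝ) (v : Fin n → ℝ) :
    vnormSq (P *ᵥ v) = v ⬝ᵥ (Pᵀ * P) *ᵥ v := by
  rw [vnormSq_eq_dotProduct, dotProduct_mulVec, ← mulVec_transpose, mulVec_mulVec, dotProduct_comm]

lemma vnormSq_mulVec_sub_mulVec_le (S St : Matrix (Fin n) (Fin n) ℝ) (c ct : Fin n → ℝ) :
    vnormSq (S *ᵥ c - St *ᵥ ct) ≤
      2 * frobSq (St - S) * vnormSq c + 2 * frobSq St * vnormSq (c - ct) := by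
  have hsplit : S *ᵥ c - St *ᵥ ct = (S - St) *ᵥ c + St *ᵥ (c - ct) := by
    rw [sub_mulVec, mulVec_sub]; abel
  rw [hsplit, frobSq_sub_comm]
  linarith [vnormSq_add_le ((S - St) *ᵥ c) (St *ᵥ (c - ct)),
    vnormSq_mulVec_le (S - St) c, vnormSq_mulVec_le St (c - ct)]

end Norms

namespace Matrix.IsHermitian

variable {m : ℕ} {H : Matrix (Fin m) (Fin m) ℝ} (hH : H.IsHermitian)

noncomputable def eigenvectorMatrix : Matrix (Fin m) (Fin m) ℝ := hH.eigenvectorUnitary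

lemma eigenvectorMatrix_mul_transpose : hH.eigenvectorMatrix * hH.eigenvectorMatrixᵀ = 1 := by
  simpa [eigenvectorMatrix, star_eq_conjTranspose] using
    mem_unitaryGroup_iff.mp hH.eigenvectorUnitary.2

lemma transpose_mul_eigenvectorMatrix : hH.eigenvectorMatrixᵀ * hH.eigenvectorMatrix = 1 := by
  simpa [eigenvectorMatrix, star_eq_conjTranspose] using
    mem_unitaryGroup_iff'.mp hH.eigenvectorUnitary.2

lemma eq_eigenvectorMatrix_mul_diagonal_mul_transpose :
    H = hH.eigenvectorMatrix * diagonal hH.eigenvalues * hH.eigenvectorMatrixᵀ := by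
  simpa [eigenvectorMatrix, Unitary.conjStarAlgAut_apply, star_eq_conjTranspose] using
    hH.spectral_theorem

lemma mulVec_add_smul_eq (a : ℝ) (u : Fin m → ℝ) :
    H *ᵥ u + a • u = hH.eigenvectorMatrix *ᵥ
      fun k => (hH.eigenvalues k + a) * (hH.eigenvectorMatrixᵀ *ᵥ u) k := by
  set V := hH.eigenvectorMatrix
  have hcoord : (fun k => (hH.eigenvalues k + a) * (Vᵀ *ᵥ u) k)
      = diagonal hH.eigenvalues *ᵥ (Vᵀ *ᵥ u) + a • (Vᵀ *ᵥ u) := by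
    ext k
    simp only [Pi.add_apply, Pi.smul_apply, mulVec_diagonal, smul_eq_mul]
    ring
  rw [hcoord, mulVec_add, mulVec_smul, mulVec_mulVec, mulVec_mulVec,
    ← hH.eq_eigenvectorMatrix_mul_diagonal_mul_transpose, mulVec_mulVec,
    hH.eigenvectorMatrix_mul_transpose, one_mulVec]

lemma vnormSq_mulVec_add_smul (a : ℝ) (u : Fin m → ℝ) :
    vnormSq (H *ᵥ u + a • u) =
      ∑ k, ((hH.eigenvalues k + a) * (hH.eigenvectorMatrixᵀ *ᵥ u) k) ^ 2 := by
  rw [hH.mulVec_add_smul_eq,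
    vnormSq_mulVec_of_transpose_mul_self hH.transpose_mul_eigenvectorMatrix]
  rfl

lemma dotProduct_mulVec_eq (u : Fin m → ℝ) :
    u ⬝ᵥ H *ᵥ u = ∑ k, hH.eigenvalues k * (hH.eigenvectorMatrixᵀ *ᵥ u) k ^ 2 := by
  have h := hH.mulVec_add_smul_eq 0 u
  simp only [zero_smul, add_zero] at h
  rw [h, dotProduct_mulVec, ← mulVec_transpose, dotProduct]
  exact Finset.sum_congr rfl fun k _ => by ring

lemma vnormSq_transpose_eigenvectorMatrix_mulVec (u : Fin m → ℝ) :
    vnormSq (hH.eigenvectorMatrixᵀ *ᵥ u) = vnormSq u :=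
  vnormSq_mulVec_of_transpose_mul_self
    (by rw [transpose_transpose, hH.eigenvectorMatrix_mul_transpose]) u

lemma dotProduct_mulVec_le_iSup_eigenvalues (u : Fin m → ℝ) :
    u ⬝ᵥ H *ᵥ u ≤ (⨆ i, hH.eigenvalues i) * vnormSq u := by
  rw [hH.dotProduct_mulVec_eq, ← hH.vnormSq_transpose_eigenvectorMatrix_mulVec u, vnormSq,
    Finset.mul_sum]
  exact Finset.sum_le_sum fun k _ => mul_le_mul_of_nonneg_right
    (le_ciSup (Set.finite_range _).bddAbove k) (sq_nonneg _)

end Matrix.IsHermitian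

lemma Matrix.PosDef.vnormSq_le_sum_inv_sq_eigenvalues_mul {m : ℕ} {N : Matrix (Fin m) (Fin m) ℝ}
    (hN : N.PosDef) {a : ℝ} (ha : 0 ≤ a) (u : Fin m → ℝ) :
    vnormSq u ≤ (∑ k, (hN.1.eigenvalues k ^ 2)⁻¹) * vnormSq (N *ᵥ u + a • u) := by
  set e := hN.1.eigenvalues
  set v := hN.1.eigenvectorMatrixᵀ *ᵥ u
  rw [hN.1.vnormSq_mulVec_add_smul, ← hN.1.vnormSq_transpose_eigenvectorMatrix_mulVec u, vnormSq,
    Finset.sum_mul]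
  refine Finset.sum_le_sum fun k _ => ?_
  have hek : 0 < e k := hN.eigenvalues_pos k
  calc v k ^ 2 = (e k ^ 2)⁻¹ * (e k ^ 2 * v k ^ 2) := by field_simp
    _ ≤ (e k ^ 2)⁻¹ * ((e k + a) ^ 2 * v k ^ 2) := by gcongr; linarith
    _ = (e k ^ 2)⁻¹ * ((e k + a) * v k) ^ 2 := by ring
    _ ≤ (e k ^ 2)⁻¹ * ∑ j, ((e j + a) * v j) ^ 2 := by
      gcongr
      exact Finset.single_le_sum (f := fun j => ((e j + a) * v j) ^ 2)
        (fun j _ => sq_nonneg _) (Finset.mem_univ k)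

section LinearSystem

variable {α ι κ ρ : Type*} [CommRing α] [Fintype ι] [Fintype κ]

lemma transpose_mulVec_eq_zero_of_mul_transpose_mulVec_eq_zero [DecidableEq κ]
    {Q : Matrix ι κ α} {R : Matrix κ κ α} (hR : IsUnit R) {v : ι → α}
    (hv : (Q * R)ᵀ *ᵥ v = 0) : Qᵀ *ᵥ v = 0 :=
  mulVec_injective_of_isUnit ((isUnit_transpose R).2 hR) <| by
    rw [mulVec_mulVec, ← transpose_mul, hv, mulVec_zero]

lemma mulVec_transpose_mulVec_eq_self [Fintype ρ] [DecidableEq ι] {Q₁ : Matrix ι κ α}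
    {Q₂ : Matrix ι ρ α} (hQ : Q₁ * Q₁ᵀ + Q₂ * Q₂ᵀ = 1) {v : ι → α} (hv : Q₁ᵀ *ᵥ v = 0) :
    Q₂ *ᵥ (Q₂ᵀ *ᵥ v) = v := by
  rw [mulVec_mulVec, eq_sub_of_add_eq' hQ, sub_mulVec, one_mulVec, ← mulVec_mulVec, hv,
    mulVec_zero, sub_zero]

lemma transpose_mul_eq_zero_of_eq_mul {T Q₁ : Matrix ι κ α} {Q₂ : Matrix ι ρ α} {R : Matrix κ κ α}
    (hQ₁₂ : Q₁ᵀ * Q₂ = 0) (hT : T = Q₁ * R) : Q₂ᵀ * T = 0 := by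
  rw [hT, ← Matrix.mul_assoc, ← transpose_transpose Q₁, ← transpose_mul, hQ₁₂, transpose_zero,
    Matrix.zero_mul]

lemma isUnit_det_transpose_mul_self_of_eq_mul [DecidableEq κ] {T Q₁ : Matrix ι κ α}
    {R : Matrix κ κ α} (hQ₁ : Q₁ᵀ * Q₁ = 1) (hR : IsUnit R) (hT : T = Q₁ * R) :
    IsUnit (Tᵀ * T).det := by
  have hR' := (isUnit_iff_isUnit_det R).1 hR
  rw [hT, transpose_mul, Matrix.mul_assoc, ← Matrix.mul_assoc Q₁ᵀ, hQ₁, Matrix.one_mul, det_mul,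
    det_transpose]
  exact hR'.mul hR'

lemma gram_inv_mul_transpose_transpose_mul_self [DecidableEq κ] (T : Matrix ι κ α) :
    ((Tᵀ * T)⁻¹ * Tᵀ)ᵀ * ((Tᵀ * T)⁻¹ * Tᵀ) = T * ((Tᵀ * T)⁻¹ * (Tᵀ * T)⁻¹) * Tᵀ := by
  simp only [transpose_mul, transpose_transpose, transpose_nonsing_inv, Matrix.mul_assoc]

variable [DecidableEq ι] {T : Matrix ι κ α} {S : Matrix ι ι α} {a : α} {c y : ι → α} {d : κ → α}

lemma add_smul_one_mulVec (S : Matrix ι ι α) (a : α) (c : ι → α) :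
    (S + a • 1) *ᵥ c = S *ᵥ c + a • c := by
  rw [add_mulVec, smul_mulVec, one_mulVec]

lemma reduced_system_of_system [Fintype ρ] {Q : Matrix ι ρ α} (hQT : Qᵀ * T = 0)
    (hc : Q *ᵥ (Qᵀ *ᵥ c) = c) (h : T *ᵥ d + (S + a • 1) *ᵥ c = y) :
    (Qᵀ * S * Q) *ᵥ (Qᵀ *ᵥ c) + a • (Qᵀ *ᵥ c) = Qᵀ *ᵥ y := by
  rw [← mulVec_mulVec, hc, ← h, add_smul_one_mulVec, mulVec_add, mulVec_add, mulVec_mulVec, hQT,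
    zero_mulVec, zero_add, mulVec_mulVec, mulVec_smul]

lemma eq_mulVec_sub_of_system [DecidableEq κ] {P : Matrix κ ι α} (hPT : P * T = 1)
    (hPc : P *ᵥ c = 0) (h : T *ᵥ d + (S + a • 1) *ᵥ c = y) : d = P *ᵥ (y - S *ᵥ c) := by
  rw [← h, add_smul_one_mulVec, mulVec_sub, mulVec_add, mulVec_add, mulVec_mulVec, hPT, one_mulVec,
    mulVec_smul, hPc, smul_zero, add_zero, add_sub_cancel_right]

lemma sub_eq_mulVec_sub_of_systems [DecidableEq κ] {P : Matrix κ ι α} {St : Matrix ι ι α}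
    {ct : ι → α} {dt : κ → α} (hPT : P * T = 1) (hPc : P *ᵥ c = 0) (hPct : P *ᵥ ct = 0)
    (h : T *ᵥ d + (S + a • 1) *ᵥ c = y) (ht : T *ᵥ dt + (St + a • 1) *ᵥ ct = y) :
    dt - d = P *ᵥ (S *ᵥ c - St *ᵥ ct) := by
  rw [eq_mulVec_sub_of_system hPT hPct ht, eq_mulVec_sub_of_system hPT hPc h, ← mulVec_sub]
  congr 1
  abel

end LinearSystem

lemma Matrix.PosDef.vnormSq_sub_le_of_shifted_eq {q : ℕ} {N Nt : Matrix (Fin q) (Fin q) ℝ}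
    (hN : N.PosDef) (hNt : Nt.PosDef) {a : ℝ} (ha : 0 ≤ a) {z zt b : Fin q → ℝ}
    (hz : N *ᵥ z + a • z = b) (hzt : Nt *ᵥ zt + a • zt = b) :
    vnormSq (z - zt) ≤ (∑ k, (hN.1.eigenvalues k ^ 2)⁻¹) * (∑ k, (hNt.1.eigenvalues k ^ 2)⁻¹) *
      frobSq (Nt - N) * vnormSq b := by
  have hdiff : N *ᵥ (z - zt) + a • (z - zt) = (Nt - N) *ᵥ zt := by
    rw [mulVec_sub, sub_mulVec, eq_sub_of_add_eq hz, eq_sub_of_add_eq hzt]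
    module
  calc vnormSq (z - zt)
      ≤ (∑ k, (hN.1.eigenvalues k ^ 2)⁻¹) * vnormSq ((Nt - N) *ᵥ zt) := by
        rw [← hdiff]; exact hN.vnormSq_le_sum_inv_sq_eigenvalues_mul ha _
    _ ≤ (∑ k, (hN.1.eigenvalues k ^ 2)⁻¹) * (frobSq (Nt - N) *
          ((∑ k, (hNt.1.eigenvalues k ^ 2)⁻¹) * vnormSq b)) := by
        gcongr
        refine (vnormSq_mulVec_le _ _).trans ?_
        gcongr
        · exact frobSq_nonneg _
        · rw [← hzt]; exact hNt.vnormSq_le_sum_inv_sq_eigenvalues_mul ha _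
    _ = _ := by ring

lemma vnormSq_sub_le_of_reduced_systems {n q : ℕ} {Q : Matrix (Fin n) (Fin q) ℝ}
    {S St : Matrix (Fin n) (Fin n) ℝ} (hN : (Qᵀ * S * Q).PosDef) (hNt : (Qᵀ * St * Q).PosDef)
    {a : ℝ} (ha : 0 ≤ a) {y c ct : Fin n → ℝ}
    (hc : Q *ᵥ (Qᵀ *ᵥ c) = c) (hct : Q *ᵥ (Qᵀ *ᵥ ct) = ct)
    (hz : (Qᵀ * S * Q) *ᵥ (Qᵀ *ᵥ c) + a • (Qᵀ *ᵥ c) = Qᵀ *ᵥ y)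
    (hzt : (Qᵀ * St * Q) *ᵥ (Qᵀ *ᵥ ct) + a • (Qᵀ *ᵥ ct) = Qᵀ *ᵥ y) :
    vnormSq (c - ct) ≤ frobSq Q ^ 3 * vnormSq (Qᵀ *ᵥ y) * (∑ k, (hN.1.eigenvalues k ^ 2)⁻¹) *
      (∑ k, (hNt.1.eigenvalues k ^ 2)⁻¹) * frobSq (St - S) := by
  have hQ := frobSq_nonneg Q
  have hNtN : Qᵀ * St * Q - Qᵀ * S * Q = Qᵀ * (St - S) * Q := by
    rw [Matrix.mul_sub, Matrix.sub_mul]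
  calc vnormSq (c - ct) = vnormSq (Q *ᵥ (Qᵀ *ᵥ c - Qᵀ *ᵥ ct)) := by rw [mulVec_sub, hc, hct]
    _ ≤ frobSq Q * vnormSq (Qᵀ *ᵥ c - Qᵀ *ᵥ ct) := vnormSq_mulVec_le _ _
    _ ≤ frobSq Q * ((∑ k, (hN.1.eigenvalues k ^ 2)⁻¹) * (∑ k, (hNt.1.eigenvalues k ^ 2)⁻¹) *
          (frobSq Q ^ 2 * frobSq (St - S)) * vnormSq (Qᵀ *ᵥ y)) := by
        gcongr
        refine (hN.vnormSq_sub_le_of_shifted_eq hNt ha hz hzt).trans ?_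
        rw [hNtN]
        gcongr
        · exact vnormSq_nonneg _
        · exact frobSq_transpose_mul_mul_le _ _
    _ = _ := by ring

section RayleighBound

variable {m n : ℕ} {P : Matrix (Fin m) (Fin n) ℝ} {A : Matrix (Fin n) (Fin n) ℝ}

lemma vnormSq_mulVec_le_iSup_eigenvalues (hPA : Pᵀ * P = A) (hA : A.IsHermitian)
    (v : Fin n → ℝ) : vnormSq (P *ᵥ v) ≤ (⨆ i, hA.eigenvalues i) * vnormSq v := by
  rw [vnormSq_mulVec_eq_dotProduct, hPA]
  exact hA.dotProduct_mulVec_le_iSup_eigenvalues v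

lemma iSup_eigenvalues_nonneg (hPA : Pᵀ * P = A) (hA : A.IsHermitian) :
    0 ≤ ⨆ i, hA.eigenvalues i := by
  subst hPA
  exact Real.iSup_nonneg fun i => by
    simpa using (posSemidef_conjTranspose_mul_self P).eigenvalues_nonneg i

end RayleighBound

theorem stmt6_general (n p : ℕ)
    (y : Fin n → ℝ) (lam : ℝ) (hlam : 0 < lam)
    (T Q₁ : Matrix (Fin n) (Fin p) ℝ) (Q₂ : Matrix (Fin n) (Fin (n - p)) ℝ)
    (R : Matrix (Fin p) (Fin p) ℝ)
    (hQ₁ : Q₁ᵀ * Q₁ = 1) (hQ₁₂ : Q₁ᵀ * Q₂ = 0)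
    (hQ : Q₁ * Q₁ᵀ + Q₂ * Q₂ᵀ = 1)
    (hR : IsUnit R) (hT : T = Q₁ * R)
    (S St : Matrix (Fin n) (Fin n) ℝ)
    (hpd : (Q₂ᵀ * S * Q₂).PosDef) (hpdt : (Q₂ᵀ * St * Q₂).PosDef)
    (hA : (T * ((Tᵀ * T)⁻¹ * (Tᵀ * T)⁻¹) * Tᵀ).IsHermitian)
    (c : Fin n → ℝ) (d : Fin p → ℝ)
    (hcd : T *ᵥ d + (S + ((n : ℝ) * lam) • 1) *ᵥ c = y) (hc0 : Tᵀ *ᵥ c = 0)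
    (ct : Fin n → ℝ) (dt : Fin p → ℝ)
    (hcdt : T *ᵥ dt + (St + ((n : ℝ) * lam) • 1) *ᵥ ct = y) (hct0 : Tᵀ *ᵥ ct = 0) :
    vnormSq (dt - d) ≤
      (2 * (⨆ i, hA.eigenvalues i) *
        (((frobSq Q₂) ^ 3 * vnormSq (Q₂ᵀ *ᵥ y)) *
          (∑ k, ((hpd.1.eigenvalues k) ^ 2)⁻¹) *
          (∑ k, ((hpdt.1.eigenvalues k) ^ 2)⁻¹) *
          frobSq St + vnormSq c)) * frobSq (St - S) := by
  have ha : 0 ≤ (n : ℝ) * lam := by positivity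
  have hQ₂T := transpose_mul_eq_zero_of_eq_mul hQ₁₂ hT
  have hproj : ∀ v, Tᵀ *ᵥ v = 0 → Q₂ *ᵥ (Q₂ᵀ *ᵥ v) = v := fun v hv =>
    mulVec_transpose_mulVec_eq_self hQ
      (transpose_mulVec_eq_zero_of_mul_transpose_mulVec_eq_zero hR (hT ▸ hv))
  have hcc := vnormSq_sub_le_of_reduced_systems hpd hpdt ha (hproj c hc0) (hproj ct hct0)
    (reduced_system_of_system hQ₂T (hproj c hc0) hcd)
    (reduced_system_of_system hQ₂T (hproj ct hct0) hcdt)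
  set P := (Tᵀ * T)⁻¹ * Tᵀ
  have hPT : P * T = 1 := by
    rw [Matrix.mul_assoc, nonsing_inv_mul _ (isUnit_det_transpose_mul_self_of_eq_mul hQ₁ hR hT)]
  have hPv : ∀ v, Tᵀ *ᵥ v = 0 → P *ᵥ v = 0 := fun v hv => by
    rw [← mulVec_mulVec, hv, mulVec_zero]
  have hdd := sub_eq_mulVec_sub_of_systems hPT (hPv c hc0) (hPv ct hct0) hcd hcdt
  have hPA := gram_inv_mul_transpose_transpose_mul_self T
  have hl := iSup_eigenvalues_nonneg hPA hA
  have hFSt := frobSq_nonneg St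
  calc vnormSq (dt - d) ≤ (⨆ i, hA.eigenvalues i) * vnormSq (S *ᵥ c - St *ᵥ ct) := by
        rw [hdd]; exact vnormSq_mulVec_le_iSup_eigenvalues hPA hA _
    _ ≤ (⨆ i, hA.eigenvalues i) *
          (2 * frobSq (St - S) * vnormSq c + 2 * frobSq St * vnormSq (c - ct)) := by
        gcongr; exact vnormSq_mulVec_sub_mulVec_le S St c ct
    _ ≤ (⨆ i, hA.eigenvalues i) * (2 * frobSq (St - S) * vnormSq c + 2 * frobSq St *
          (frobSq Q₂ ^ 3 * vnormSq (Q₂ᵀ *ᵥ y) * (∑ k, (hpd.1.eigenvalues k ^ 2)⁻¹) *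
            (∑ k, (hpdt.1.eigenvalues k ^ 2)⁻¹) * frobSq (St - S))) := by
        gcongr
    _ = _ := by ring

/-- Lemma A.1, second bound: in the smoothing spline truncation setting, with
`A = T(TᵀT)⁻²Tᵀ`, `λ_max(A)` its largest eigenvalue, and
`ζ₂ = 2 λ_max(A) (ζ₁ B B̃ ‖Σ̃‖_F² + ‖c‖²)`, one has `‖d̃ − d‖² ≤ ζ₂ ‖Σ̃ − Σ‖_F²`. -/
theorem stmt6 (n p : ℕ) (hp : 1 ≤ p) (hpn : p < n)
    (y : Fin n → ℝ) (lam : ℝ) (hlam : 0 < lam)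
    (T Q₁ : Matrix (Fin n) (Fin p) ℝ) (Q₂ : Matrix (Fin n) (Fin (n - p)) ℝ)
    (R : Matrix (Fin p) (Fin p) ℝ)
    (hQ₁ : Q₁ᵀ * Q₁ = 1) (hQ₂ : Q₂ᵀ * Q₂ = 1) (hQ₁₂ : Q₁ᵀ * Q₂ = 0)
    (hQ : Q₁ * Q₁ᵀ + Q₂ * Q₂ᵀ = 1)
    (hR : IsUnit R) (hRtri : R.BlockTriangular id) (hT : T = Q₁ * R)
    (K : ℕ) (hK : 1 ≤ K) (κ : ℝ) (hκ : 0 < κ)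
    (δ : ℕ → ℝ) (hδ0 : ∀ k, 0 ≤ δ k) (hδmono : ∀ k, δ (k + 1) ≤ δ k) (hδsum : Summable δ)
    (U : Fin n → ℕ → ℝ) (hU : ∀ i k, |U i k| ≤ κ)
    (S St : Matrix (Fin n) (Fin n) ℝ)
    (hS : ∀ i j, S i j = ∑' k, δ k * U i k * U j k)
    (hSt : ∀ i j, St i j = ∑ k ∈ Finset.range K, δ k * U i k * U j k)
    (hSpsd : S.PosSemidef) (hStpsd : St.PosSemidef)
    (hpd : (Q₂ᵀ * S * Q₂).PosDef) (hpdt : (Q₂ᵀ * St * Q₂).PosDef)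
    (hA : (T * ((Tᵀ * T)⁻¹ * (Tᵀ * T)⁻¹) * Tᵀ).IsHermitian)
    (c : Fin n → ℝ) (d : Fin p → ℝ)
    (hcd : T *ᵥ d + (S + ((n : ℝ) * lam) • 1) *ᵥ c = y) (hc0 : Tᵀ *ᵥ c = 0)
    (ct : Fin n → ℝ) (dt : Fin p → ℝ)
    (hcdt : T *ᵥ dt + (St + ((n : ℝ) * lam) • 1) *ᵥ ct = y) (hct0 : Tᵀ *ᵥ ct = 0) :
    vnormSq (dt - d) ≤
      (2 * (⨆ i, hA.eigenvalues i) *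
        (((frobSq Q₂) ^ 3 * vnormSq (Q₂ᵀ *ᵥ y)) *
          (∑ k, ((hpd.1.eigenvalues k) ^ 2)⁻¹) *
          (∑ k, ((hpdt.1.eigenvalues k) ^ 2)⁻¹) *
          frobSq St + vnormSq c)) * frobSq (St - S) :=
  stmt6_general n p y lam hlam T Q₁ Q₂ R hQ₁ hQ₁₂ hQ hR hT S St hpd hpdt hA c d hcd hc0 ct dt hcdt
    hct0
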